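/- arXiv:2510.03036 — 3 statements merged into one kernel-verified Lean document; each statement's English description precedes it below -/
import Mathlib

section
/- Assume n ≥ 2 and w_1 ≤ w_2 ≤ … ≤ w_n. If u ∈ (ℤ_{≥0})^n is a w-bubble, then u_i ≤ w_n − 2 for every i ∈ {1, …, n−1}, and u_n ≤ w_{n−1} − 2. -/
/-- The weighted dot product `w · u = ∑ i, w i * u i`. -/
def dotW {n : ℕ} (w u : Fin n → ℕ) : ℕ := ∑ i, w i * u i

/-- `d_w`, the least common multiple of the weights. -/
def lcmW {n : ℕ} (w : Fin n → ℕ) : ℕ := Finset.univ.lcm w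

/-- `u` is a `w`-bubble: `w · u ≥ 2 d_w` and there is no `v ⪯ u` with `w · v = d_w`. -/
def IsBubble {n : ℕ} (w u : Fin n → ℕ) : Prop :=
  2 * lcmW w ≤ dotW w u ∧
    ¬ ∃ v : Fin n → ℕ, (∀ i, v i ≤ u i) ∧ dotW w v = lcmW w

/-!
If `u i + 1 ≥ w k` for every `k ≠ i`, then `d_w` is representable below `u`. Write `s = w i`
and `d_w = s * D`. The coins `w k` (`k ≠ i`, each available `u k` times) are at most `u i + 1`,
and among any `s` of them there is a nonempty block of at most `s` coins whose sum `s * β` is a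
multiple of `s` (two of the `s + 1` prefix sums agree mod `s`), so `β ≤ u i + 1`. Greedily paying
`s * D` with such blocks brings the target down to at most `u i` copies of `s`, which coin `i`
pays. For a monotone `w`, the largest weight off the coordinate `i` is `w_n`, or `w_{n-1}` when
`i = n`.
-/

namespace Multiset

variable {α : Type*}

theorem exists_le_card_le_dvd_sum_map (f : α → ℕ) {s : ℕ} (hs : 0 < s) (I : Multiset α)
    (hI : s ≤ card I) : ∃ B ≤ I, 0 < card B ∧ card B ≤ s ∧ s ∣ (B.map f).sum := by
  set l := I.toList
  have hl : s ≤ l.length := by rwa [length_toList]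
  obtain ⟨a, ha, b, hb, hne, hab⟩ := Finset.exists_ne_map_eq_of_card_lt_of_maps_to
    (s := Finset.range (s + 1)) (t := Finset.range s) (by simp)
    (f := fun k => ((l.take k).map f).sum % s) fun k _ => by simpa using Nat.mod_lt _ hs
  wlog hlt : a < b generalizing a b
  · exact this b hb a ha hne.symm hab.symm (by omega)
  simp only [Finset.mem_range] at ha hb
  have hlen : ((l.take b).drop a).length = b - a := by simp; omega
  refine ⟨((l.take b).drop a : List α), ?_, by simp [hlen]; omega, by simp [hlen]; omega, ?_⟩
  · rw [← coe_toList I]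
    exact coe_le.mpr (((l.take b).drop_sublist a).trans (l.take_sublist b)).subperm
  · have hsplit : ((l.take a).map f).sum + (((l.take b).drop a).map f).sum
        = ((l.take b).map f).sum := by
      have htake : (l.take b).take a = l.take a := by rw [List.take_take, min_eq_left hlt.le]
      rw [← htake, ← List.sum_append, ← List.map_append, List.take_append_drop]
    have hdvd := (Nat.modEq_iff_dvd' (hsplit ▸ Nat.le_add_right _ _)).mp hab
    rwa [← hsplit, Nat.add_sub_cancel_left, ← sum_coe, ← map_coe] at hdvd

theorem exists_le_sum_map_add_mul_eq [DecidableEq α] (f : α → ℕ) {s q : ℕ} (hs : 0 < s)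
    (I : Multiset α) (hI : ∀ x ∈ I, f x ≤ q + 1) {D : ℕ} (hD : s * D ≤ (I.map f).sum) :
    ∃ J ≤ I, ∃ a ≤ q, (J.map f).sum + s * a = s * D := by
  induction hc : card I using Nat.strong_induction_on generalizing I D with
  | _ c ih =>
  rcases le_or_gt D q with hDq | hqD
  · exact ⟨0, zero_le I, D, hDq, by simp⟩
  have hsum_le : ∀ B ≤ I, (B.map f).sum ≤ card B * (q + 1) := fun B hB => by
    simpa using sum_le_card_nsmul (B.map f) (q + 1)
      (by simpa using fun x hx => hI x (mem_of_le hB hx))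
  have hcard : s ≤ card I := by
    by_contra! h
    nlinarith [hsum_le I le_rfl]
  obtain ⟨B, hBI, hB0, hBs, β, hβ⟩ := exists_le_card_le_dvd_sum_map f hs I hcard
  have hβD : β ≤ D := by
    have : s * β ≤ s * (q + 1) := hβ ▸ (hsum_le B hBI).trans (Nat.mul_le_mul_right _ hBs)
    have := Nat.le_of_mul_le_mul_left this hs
    omega
  have hIB : I - B + B = I := tsub_add_cancel_of_le hBI
  have hsplit : ((I - B).map f).sum + s * β = (I.map f).sum := by
    rw [← hβ, ← sum_add, ← map_add, hIB]
  have hDβ : s * (D - β) + s * β = s * D := by rw [← Nat.mul_add, Nat.sub_add_cancel hβD]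
  have hcardIB : card (I - B) + card B = card I := by rw [← card_add, hIB]
  obtain ⟨J, hJ, a, ha, hJa⟩ := ih (card (I - B)) (by omega) (I - B)
    (fun x hx => hI x (mem_of_le tsub_le_self hx)) (D := D - β)
    (by omega) rfl
  refine ⟨J + B, (add_le_add_left hJ B).trans_eq hIB, a, ha, ?_⟩
  rw [map_add, sum_add, hβ]
  omega

end Multiset

section Weights

variable {n : ℕ}

theorem dotW_add (w u v : Fin n → ℕ) : dotW w (u + v) = dotW w u + dotW w v := by
  simp only [dotW, Pi.add_apply, mul_add, Finset.sum_add_distrib]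

theorem dotW_single (w : Fin n → ℕ) (i : Fin n) (a : ℕ) :
    dotW w (Pi.single i a) = w i * a := by
  simp [dotW, Pi.single_apply]

theorem Multiset.sum_map_eq_dotW_count (w : Fin n → ℕ) (J : Multiset (Fin n)) :
    (J.map w).sum = dotW w (J.count ·) := by
  rw [Finset.sum_multiset_map_count, dotW]
  refine Finset.sum_subset (Finset.subset_univ _) (fun k _ hk => ?_) |>.trans ?_
  · simp [Multiset.count_eq_zero_of_notMem (by simpa using hk)]
  · simp [mul_comm]

theorem exists_le_dotW_eq_of_dvd {w u : Fin n → ℕ} {t : ℕ} (i : Fin n)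
    (hw : ∀ k ≠ i, w k ≤ u i + 1) (hdvd : w i ∣ t) (ht : 2 * t ≤ dotW w u) :
    ∃ v, (∀ k, v k ≤ u k) ∧ dotW w v = t := by
  obtain ⟨D, rfl⟩ := hdvd
  rcases (w i).eq_zero_or_pos with hwi | hwi
  · exact ⟨0, fun k => Nat.zero_le _, by simp [dotW, hwi]⟩
  set u' := Function.update u i 0
  set I : Multiset (Fin n) := ∑ k, Multiset.replicate (u' k) k
  have hI : ∀ k, I.count k = u' k := fun k => by
    simp [I, Multiset.count_sum', Multiset.count_replicate]
  have hdot : dotW w u = dotW w u' + w i * u i := by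
    rw [← dotW_single, ← dotW_add]
    congr 1
    ext k
    rcases eq_or_ne k i with rfl | hk <;> simp [u', *]
  obtain ⟨J, hJI, a, ha, hJ⟩ :
      ∃ J ≤ I, ∃ a ≤ u i, (J.map w).sum + w i * a = w i * D := by
    rcases le_or_gt D (u i) with hD | hD
    · exact ⟨0, Multiset.zero_le I, D, hD, by simp⟩
    refine Multiset.exists_le_sum_map_add_mul_eq w hwi I (fun k hk => hw k ?_) ?_
    · rintro rfl
      simpa [hI, u'] using Multiset.count_pos.mpr hk
    · have : w i * u i ≤ w i * D := Nat.mul_le_mul_left _ hD.le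
      rw [Multiset.sum_map_eq_dotW_count, funext hI]
      omega
  refine ⟨(J.count ·) + Pi.single i a, fun k => ?_, ?_⟩
  · have := Multiset.count_le_of_le k hJI
    rcases eq_or_ne k i with rfl | hk <;> simp_all [u']
  · rw [dotW_add, dotW_single, ← Multiset.sum_map_eq_dotW_count, hJ]

theorem IsBubble.exists_ne_add_two_le {w u : Fin n → ℕ} (hu : IsBubble w u) (i : Fin n) :
    ∃ k ≠ i, u i + 2 ≤ w k := by
  by_contra! h
  exact hu.2 <| exists_le_dotW_eq_of_dvd i (fun k hk => by have := h k hk; omega)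
    (Finset.dvd_lcm (Finset.mem_univ i)) hu.1

end Weights

theorem bubble_coord_le_of_monotone {n : ℕ} (hn : 2 ≤ n) (w : Fin n → ℕ)
    (hmono : Monotone w) (u : Fin n → ℕ) (hu : IsBubble w u) :
    (∀ i : Fin n, (i : ℕ) < n - 1 → (u i : ℤ) ≤ (w ⟨n - 1, by omega⟩ : ℤ) - 2) ∧
      (u ⟨n - 1, by omega⟩ : ℤ) ≤ (w ⟨n - 2, by omega⟩ : ℤ) - 2 := by
  constructor
  · intro i _
    obtain ⟨k, -, hk⟩ := hu.exists_ne_add_two_le i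
    have : w k ≤ w ⟨n - 1, by omega⟩ := hmono (Fin.le_def.mpr (by simp; omega))
    omega
  · obtain ⟨k, hki, hk⟩ := hu.exists_ne_add_two_le ⟨n - 1, by omega⟩
    have : w k ≤ w ⟨n - 2, by omega⟩ :=
      hmono (Fin.le_def.mpr (by have := Fin.val_ne_of_ne hki; simp at this ⊢; omega))
    omega
end

section
/- Assume n ≥ 2 and let i ∈ {1, …, n}. For every w-bubble u, either u_i > 0, or there exists a π_i(w)-bubble u' with u' ⪯ π_i(u) and π_i(w)·u' ≥ w·u + d_{π_i(w)} − d_w. -/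
lemma dotW_add_s15 {n : ℕ} (w a b : Fin n → ℕ) :
    dotW w (fun j => a j + b j) = dotW w a + dotW w b := by
  simp [dotW, mul_add, Finset.sum_add_distrib]

lemma dotW_mono {n : ℕ} (w : Fin n → ℕ) {a b : Fin n → ℕ} (h : ∀ j, a j ≤ b j) :
    dotW w a ≤ dotW w b :=
  Finset.sum_le_sum fun j _ => Nat.mul_le_mul_left _ (h j)

lemma lcmW_pos {n : ℕ} (w : Fin n → ℕ) (hw : ∀ i, 0 < w i) : 0 < lcmW w := by
  rw [Nat.pos_iff_ne_zero]
  intro h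
  rw [lcmW, Finset.lcm_eq_zero_iff] at h
  obtain ⟨j, -, hj⟩ := h
  exact absurd hj.symm (Nat.pos_iff_ne_zero.mp (hw j)).symm

/-- Greedy reduction: strip disjoint pieces of weight `d'` from `x` until none remain. -/
lemma reduce {n : ℕ} (w' : Fin n → ℕ) (hd' : 0 < lcmW w') (N : ℕ) :
    ∀ x : Fin n → ℕ, dotW w' x ≤ N → ∃ u' V : Fin n → ℕ,
      (∀ j, u' j + V j = x j) ∧
      (¬ ∃ v : Fin n → ℕ, (∀ j, v j ≤ u' j) ∧ dotW w' v = lcmW w') ∧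
      lcmW w' ∣ dotW w' V ∧
      (∀ t : ℕ, t * lcmW w' ≤ dotW w' V → ∃ s : Fin n → ℕ,
        (∀ j, s j ≤ V j) ∧ dotW w' s = t * lcmW w') := by
  induction N with
  | zero =>
    intro x hx
    refine ⟨x, fun _ => 0, fun j => rfl, ?_, ?_, ?_⟩
    · rintro ⟨v, hv, hdv⟩
      have := (dotW_mono w' hv).trans hx
      omega
    · simp [dotW]
    · intro t ht
      have hdot0 : dotW w' (fun _ : Fin n => 0) = 0 := by simp [dotW]
      rw [hdot0] at ht
      have ht' : t = 0 := by
        rcases Nat.eq_zero_or_pos t with h | h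
        · exact h
        · nlinarith
      refine ⟨fun _ => 0, fun j => le_refl 0, by simp [dotW, ht']⟩
  | succ N ih =>
    intro x hx
    by_cases h : ∃ v : Fin n → ℕ, (∀ j, v j ≤ x j) ∧ dotW w' v = lcmW w'
    · obtain ⟨v, hv, hdv⟩ := h
      set y : Fin n → ℕ := fun j => x j - v j with hy
      have hyv : ∀ j, y j + v j = x j := fun j => Nat.sub_add_cancel (hv j)
      have hdxy : dotW w' y + lcmW w' = dotW w' x := by
        rw [← hdv, ← dotW_add_s15 w' y v]
        congr 1
        funext j; exact hyv j
      have hyN : dotW w' y ≤ N := by omega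
      obtain ⟨u', V', hsum, hno, hdvd, hext⟩ := ih y hyN
      refine ⟨u', fun j => V' j + v j, ?_, hno, ?_, ?_⟩
      · intro j
        show u' j + (V' j + v j) = x j
        have h1 := hsum j
        have h2 := hyv j
        omega
      · rw [dotW_add_s15 w' V' v, hdv]
        exact Dvd.dvd.add hdvd dvd_rfl
      · intro t ht
        rw [dotW_add_s15 w' V' v, hdv] at ht
        rcases Nat.eq_zero_or_pos t with h0 | h0
        · exact ⟨fun _ => 0, fun j => Nat.zero_le _, by simp [dotW, h0]⟩
        · obtain ⟨t0, rfl⟩ := Nat.exists_eq_add_of_lt h0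
          rw [zero_add] at ht ⊢
          rw [add_mul, one_mul] at ht
          have ht' : t0 * lcmW w' ≤ dotW w' V' := by omega
          obtain ⟨s', hs', hds'⟩ := hext t0 ht'
          refine ⟨fun j => s' j + v j, fun j => Nat.add_le_add (hs' j) le_rfl, ?_⟩
          rw [dotW_add_s15 w' s' v, hds', hdv, add_mul, one_mul]
    · refine ⟨x, fun _ => 0, fun j => rfl, h, by simp [dotW], ?_⟩
      intro t ht
      have hdot0 : dotW w' (fun _ : Fin n => 0) = 0 := by simp [dotW]
      rw [hdot0] at ht
      have ht' : t = 0 := by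
        rcases Nat.eq_zero_or_pos t with h0 | h0
        · exact h0
        · nlinarith
      exact ⟨fun _ => 0, fun j => le_refl 0, by simp [dotW, ht']⟩

theorem bubble_pos_or_projection_bubble {n : ℕ} (hn : 0 < n) (w : Fin (n + 1) → ℕ)
    (hw : ∀ i, 0 < w i) (i : Fin (n + 1)) (u : Fin (n + 1) → ℕ) (hu : IsBubble w u) :
    0 < u i ∨ ∃ u' : Fin n → ℕ, IsBubble (w ∘ i.succAbove) u' ∧
      (∀ j : Fin n, u' j ≤ u (i.succAbove j)) ∧
      (dotW w u : ℤ) + (lcmW (w ∘ i.succAbove) : ℤ) - (lcmW w : ℤ) ≤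
        (dotW (w ∘ i.succAbove) u' : ℤ) := by
  by_cases hui : 0 < u i
  · exact Or.inl hui
  right
  have hui0 : u i = 0 := by omega
  set w' : Fin n → ℕ := w ∘ i.succAbove with hw'
  set u0 : Fin n → ℕ := u ∘ i.succAbove with hu0
  have hdpos : 0 < lcmW w := lcmW_pos w hw
  have hd'pos : 0 < lcmW w' := lcmW_pos w' fun j => hw _
  have hdvd' : lcmW w' ∣ lcmW w := by
    apply Finset.lcm_dvd
    intro j _
    exact Finset.dvd_lcm (Finset.mem_univ (i.succAbove j))
  have hdots : dotW w u = dotW w' u0 := by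
    rw [dotW, Fin.sum_univ_succAbove (fun j => w j * u j) i, hui0]
    simp [dotW, hw', hu0]
  obtain ⟨u', V, hsum, hno, hVdvd, hext⟩ :=
    reduce w' hd'pos (dotW w' u0) u0 le_rfl
  have hdotsum : dotW w' u' + dotW w' V = dotW w' u0 := by
    rw [← dotW_add_s15 w' u' V]
    congr 1
    funext j; exact hsum j
  -- the stripped amount is less than lcmW w
  have hVlt : dotW w' V < lcmW w := by
    by_contra hge
    push_neg at hge
    obtain ⟨m, hm⟩ := hdvd'
    have hmd : m * lcmW w' = lcmW w := by rw [hm]; ring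
    obtain ⟨s, hs, hds⟩ := hext m (by omega)
    apply hu.2
    set S : Fin (n + 1) → ℕ := i.insertNth (α := fun _ => ℕ) 0 s with hS
    have hSi : S i = 0 := by simp [hS]
    have hSs : ∀ j, S (i.succAbove j) = s j := by
      intro j; simp [hS]
    refine ⟨S, ?_, ?_⟩
    · intro j
      refine Fin.succAboveCases (α := fun j => S j ≤ u j) i ?_ ?_ j
      · show S i ≤ u i
        rw [hSi]; exact Nat.zero_le _
      · intro j'
        show S (i.succAbove j') ≤ u (i.succAbove j')
        rw [hSs]
        have h1 := hs j'
        have h2 := hsum j'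
        have h3 : u0 j' = u (i.succAbove j') := rfl
        omega
    · rw [dotW, Fin.sum_univ_succAbove (fun j => w j * S j) i, hSi]
      have : (∑ j : Fin n, w (i.succAbove j) * S (i.succAbove j)) = dotW w' s := by
        rw [dotW]
        exact Finset.sum_congr rfl fun j _ => by rw [hSs]; rfl
      rw [mul_zero, zero_add, this, hds, hmd]
  -- hence at most lcmW w - lcmW w' was stripped
  have hVle : dotW w' V + lcmW w' ≤ lcmW w := by
    obtain ⟨k, hk⟩ := hVdvd
    obtain ⟨m, hm⟩ := hdvd'
    have hkm : k < m := by nlinarith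
    have h1 : (k + 1) * lcmW w' ≤ m * lcmW w' := Nat.mul_le_mul_right _ (by omega)
    nlinarith
  have hub : 2 * lcmW w ≤ dotW w u := hu.1
  refine ⟨u', ⟨?_, hno⟩, ?_, ?_⟩
  · have hdd' : lcmW w' ≤ lcmW w := Nat.le_of_dvd hdpos hdvd'
    omega
  · intro j
    have h1 := hsum j
    have h2 : u0 j = u (i.succAbove j) := rfl
    omega
  · have : dotW w u + lcmW w' ≤ dotW w' u' + lcmW w := by omega
    push_cast
    omega
end

section
/- Let u be a w-bubble such that u_j > 0 for every j ∈ {1, …, n}. Then for every i ∈ {1, …, n} such that Σ_{j ≠ i} w_j < d_w + w_i, one has u_i ≤ ⌊(max(π_i(w)) + c_{w,i}) / w_i⌋ − 2. -/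
open scoped Classical

/-- `B_{w,i,r}`: the set of values `w · b` for `b ∈ {0,1}^n` with `b_i = 0` and
`w · b ≡ r (mod w_i)`; such `b` correspond to finsets `S` with `i ∉ S`. -/
def BsetW {n : ℕ} (w : Fin n → ℕ) (i : Fin n) (r : ℕ) : Set ℕ :=
  { m | ∃ S : Finset (Fin n), i ∉ S ∧ (∑ j ∈ S, w j) = m ∧ m % w i = r }

/-- `b_{w,i,r}`: the minimum of `B_{w,i,r}` if nonempty, and `(w_i − 1)·max(π_i(w))`
otherwise. -/
noncomputable def bvalW {n : ℕ} (w : Fin n → ℕ) (i : Fin n) (r : ℕ) : ℕ :=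
  if (BsetW w i r).Nonempty then sInf (BsetW w i r)
  else (w i - 1) * (Finset.univ.erase i).sup w

/-- `c_{w,i} = max { b_{w,i,r} : 0 ≤ r ≤ w_i − 1 }`. -/
noncomputable def cvalW {n : ℕ} (w : Fin n → ℕ) (i : Fin n) : ℕ :=
  (Finset.range (w i)).sup (bvalW w i)

/-!
Write `d = d_w`, `M = max π_i(w)` and `c = c_{w,i}`; it suffices to show `w_i (u_i + 2) ≤ M + c`.
Vectors `v ⪯ u` are encoded as sub-multisets of the multiset of indices of `u`. If such a
sub-multiset avoids `i` and has weight a multiple of `w_i` that is at most `d`, its weight is at least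
`w_i (u_i + 1)` below `d`, since otherwise copies of `i` would complete it to weight `d`.

If some `B_{w,i,r}` is empty, then `c ≥ (w_i - 1) M` and it is enough to have `u_i + 2 ≤ M`.
Were `M ≤ u_i + 1`, the entries of `u` off `i` (each of weight at most `M`) would carry weight at
least `d + (w_i - 1) M`, and by pigeonhole on prefix sums one could repeatedly take blocks of at
most `w_i` entries with sum divisible by `w_i` until the weight lands in `[d - w_i u_i, d]`.

If every `B_{w,i,r}` is nonempty, take entries of `u - 1` off `i` greedily while the weight stays at
most `d + w_i - 1 - c`, then add a set `S ∌ i` of weight at most `c` that makes the total divisible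
by `w_i`. The greedy step ends either within `M` of its target or having used all of `u - 1`, and
in the latter case `Σ_{j ≠ i} w_j < d + w_i` bounds the remaining gap.
-/

namespace Multiset

variable {α : Type*} (f : α → ℕ)

theorem exists_le_sum_map_le_and_eq_or_lt_add {M : ℕ} (T : ℕ) (s : Multiset α)
    (hM : ∀ a ∈ s, f a ≤ M) :
    ∃ t ≤ s, (t.map f).sum ≤ T ∧ (t = s ∨ T < (t.map f).sum + M) := by
  induction s using Multiset.induction_on with
  | empty => exact ⟨0, le_rfl, by simp, Or.inl rfl⟩
  | cons a s ih =>
    have haM : f a ≤ M := hM a (mem_cons_self a s)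
    by_cases hall : ((a ::ₘ s).map f).sum ≤ T
    · exact ⟨a ::ₘ s, le_rfl, hall, Or.inl rfl⟩
    rw [map_cons, sum_cons] at hall
    by_cases hs : (s.map f).sum ≤ T
    · exact ⟨s, le_cons_self s a, hs, Or.inr (by omega)⟩
    obtain ⟨t, hts, htT, rfl | hlt⟩ := ih fun b hb => hM b (mem_cons_of_mem hb)
    · exact absurd htT hs
    · exact ⟨t, hts.trans (le_cons_self s a), htT, Or.inr hlt⟩

theorem exists_ne_zero_le_card_le_dvd_sum_map {q : ℕ} (hq : 0 < q) (s : Multiset α)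
    (hs : q ≤ card s) : ∃ z ≤ s, z ≠ 0 ∧ card z ≤ q ∧ q ∣ (z.map f).sum := by
  set l := s.toList
  have hl : q ≤ l.length := by rwa [length_toList]
  -- pigeonhole on the `q + 1` prefix sums modulo `q`
  have block : ∀ a b, a < b → b ≤ q →
      ((l.take a).map f).sum % q = ((l.take b).map f).sum % q →
      ∃ z ≤ s, z ≠ 0 ∧ card z ≤ q ∧ q ∣ (z.map f).sum := by
    intro a b hab hbq hmod
    have hsplit := List.sum_take_add_sum_drop ((l.take b).map f) a
    rw [← List.map_take, ← List.map_drop, List.take_take, min_eq_left hab.le] at hsplit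
    refine ⟨((l.take b).drop a : List α), ?_, ?_, ?_, ?_⟩
    · rw [← coe_toList s, coe_le]
      exact ((List.drop_sublist _ _).trans (List.take_sublist _ _)).subperm
    · simp only [ne_eq, coe_eq_zero, List.drop_eq_nil_iff, List.length_take]
      omega
    · simp only [coe_card, List.length_drop, List.length_take]
      omega
    · rw [map_coe, sum_coe]
      have hdvd := (Nat.modEq_iff_dvd' (by omega)).mp hmod
      rwa [← hsplit, Nat.add_sub_cancel_left] at hdvd
  obtain ⟨a, ha, b, hb, hne, hab⟩ := Finset.exists_ne_map_eq_of_card_lt_of_maps_to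
    (s := Finset.range (q + 1)) (t := Finset.range q) (f := fun k => ((l.take k).map f).sum % q)
    (by simp) (fun k _ => by simpa using Nat.mod_lt _ hq)
  simp only [Finset.mem_range] at ha hb
  rcases hne.lt_or_gt with h | h
  · exact block a b h (by omega) hab
  · exact block b a h (by omega) hab.symm

theorem sum_map_le_card_mul {M : ℕ} (s : Multiset α) (hM : ∀ a ∈ s, f a ≤ M) :
    (s.map f).sum ≤ card s * M := by
  simpa using sum_le_card_nsmul (s.map f) M (by simpa using hM)

theorem exists_le_dvd_sum_map_mem_Icc [DecidableEq α] {q M : ℕ} (hq : 0 < q) (s : Multiset α)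
    (hf : ∀ a ∈ s, 0 < f a ∧ f a ≤ M) {D : ℕ} (hD : q ∣ D)
    (hs : D + (q - 1) * M ≤ (s.map f).sum) :
    ∃ t ≤ s, q ∣ (t.map f).sum ∧ (t.map f).sum ∈ Set.Icc D (D + q * (M - 1)) := by
  induction D using Nat.strong_induction_on generalizing s with
  | _ D ih =>
  rcases Nat.eq_zero_or_pos D with rfl | hDpos
  · exact ⟨0, zero_le s, by simp, by simp⟩
  have hqD : q ≤ D := Nat.le_of_dvd hDpos hD
  have hsM := sum_map_le_card_mul f s fun a ha => (hf a ha).2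
  have hqs : q ≤ card s := by
    by_contra! h
    have := Nat.mul_le_mul_right M (Nat.le_sub_one_of_lt h)
    omega
  -- a nonempty block of at most `q` elements with sum divisible by `q` is peeled off
  obtain ⟨z, hzs, hz0, hzq, hzdvd⟩ := exists_ne_zero_le_card_le_dvd_sum_map f hq s hqs
  have hz_pos : 0 < (z.map f).sum := by
    obtain ⟨a, ha⟩ := exists_mem_of_ne_zero hz0
    exact (hf a (mem_of_le hzs ha)).1.trans_le
      (single_le_sum (fun _ _ => Nat.zero_le _) _ (mem_map_of_mem f ha))
  have hz_le : (z.map f).sum ≤ q * M :=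
    (sum_map_le_card_mul f z fun a ha => (hf a (mem_of_le hzs ha)).2).trans
      (Nat.mul_le_mul_right M hzq)
  have hqM : q * (M - 1) = q * M - q := Nat.mul_sub_one q M
  by_cases hDz : D ≤ (z.map f).sum
  · exact ⟨z, hzs, hzdvd, hDz, by omega⟩
  have hsz : ((s - z).map f).sum + (z.map f).sum = (s.map f).sum := by
    rw [← sum_add, ← map_add, tsub_add_cancel_of_le hzs]
  obtain ⟨t, hts, htdvd, htD, htE⟩ := ih (D - (z.map f).sum) (by omega) (s - z)
    (fun a ha => hf a (mem_of_le (Multiset.sub_le_self s z) ha)) (Nat.dvd_sub hD hzdvd) (by omega)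
  refine ⟨t + z, ?_, ?_, ?_, ?_⟩
  · exact (add_le_add_left hts z).trans_eq (tsub_add_cancel_of_le hzs)
  all_goals rw [map_add, sum_add]
  · exact Nat.dvd_add htdvd hzdvd
  · omega
  · omega

end Multiset

open Finset

def indexBag {ι : Type*} (s : Finset ι) (u : ι → ℕ) : Multiset ι :=
  ∑ j ∈ s, Multiset.replicate (u j) j

section indexBag

variable {ι : Type*} {s : Finset ι} {u : ι → ℕ}

theorem sum_map_indexBag (f : ι → ℕ) :
    ((indexBag s u).map f).sum = ∑ j ∈ s, f j * u j := by
  change (Multiset.sumAddMonoidHom.comp (Multiset.mapAddMonoidHom f)) _ = _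
  simp [indexBag, map_sum, mul_comm]

variable [DecidableEq ι]

theorem count_indexBag (j : ι) : (indexBag s u).count j = if j ∈ s then u j else 0 := by
  simp [indexBag, Multiset.count_sum', Multiset.count_replicate]

theorem mem_of_mem_indexBag {j : ι} (hj : j ∈ indexBag s u) : j ∈ s := by
  by_contra h
  simp [← Multiset.count_pos, count_indexBag, h] at hj

theorem count_le_of_le_indexBag {t : Multiset ι} (ht : t ≤ indexBag s u) (j : ι) :
    t.count j ≤ u j :=
  (Multiset.count_le_of_le j ht).trans (by rw [count_indexBag]; split_ifs <;> omega)

theorem notMem_of_le_indexBag {t : Multiset ι} (ht : t ≤ indexBag s u) {j : ι} (hj : j ∉ s) :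
    j ∉ t :=
  fun h => hj (mem_of_mem_indexBag (Multiset.mem_of_le ht h))

end indexBag

section Bubble

variable {n : ℕ}

theorem dotW_eq_add_sum_erase (w u : Fin n → ℕ) (i : Fin n) :
    dotW w u = w i * u i + ∑ j ∈ univ.erase i, w j * u j :=
  (add_sum_erase _ _ (mem_univ i)).symm

theorem dotW_count (w : Fin n → ℕ) (T : Multiset (Fin n)) :
    dotW w (fun j => T.count j) = (T.map w).sum := by
  rw [dotW, sum_multiset_map_count, sum_subset (subset_univ T.toFinset)]
  · simp [mul_comm]
  · intro j _ hj
    simp_all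

theorem dvd_lcmW (w : Fin n → ℕ) (i : Fin n) : w i ∣ lcmW w :=
  Finset.dvd_lcm (mem_univ i)

variable {w u : Fin n → ℕ}

theorem IsBubble.sum_map_ne_lcmW (hu : IsBubble w u) {T : Multiset (Fin n)}
    (hT : ∀ j, T.count j ≤ u j) : (T.map w).sum ≠ lcmW w :=
  fun h => hu.2 ⟨fun j => T.count j, hT, by rw [dotW_count, h]⟩

theorem IsBubble.two_mul_lcmW_le (hu : IsBubble w u) (i : Fin n) :
    2 * lcmW w ≤ w i * u i + ∑ j ∈ univ.erase i, w j * u j :=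
  hu.1.trans_eq (dotW_eq_add_sum_erase w u i)

/-- Otherwise `t` together with `(d_w - w·t) / w_i` copies of `i` would have weight `d_w`. -/
theorem IsBubble.sum_map_add_mul_succ_le (hu : IsBubble w u) {i : Fin n} {t : Multiset (Fin n)}
    (hit : i ∉ t) (ht : ∀ j, t.count j ≤ u j) (hdvd : w i ∣ (t.map w).sum)
    (hle : (t.map w).sum ≤ lcmW w) : (t.map w).sum + w i * (u i + 1) ≤ lcmW w := by
  by_contra! hlt
  obtain ⟨k, hk⟩ := Nat.dvd_sub (dvd_lcmW w i) hdvd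
  have hku : k < u i + 1 := Nat.lt_of_mul_lt_mul_left (a := w i) (by omega)
  refine hu.sum_map_ne_lcmW (T := t + Multiset.replicate k i) (fun j => ?_) ?_
  · rw [Multiset.count_add, Multiset.count_replicate]
    split_ifs with hij
    · subst hij
      simpa [Multiset.count_eq_zero.mpr hit, Nat.lt_succ_iff] using hku
    · simpa using ht j
  · rw [Multiset.map_add, Multiset.sum_add, Multiset.map_replicate, Multiset.sum_replicate,
      smul_eq_mul, mul_comm]
    omega

theorem IsBubble.mul_succ_le_lcmW (hu : IsBubble w u) (i : Fin n) : w i * (u i + 1) ≤ lcmW w := by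
  simpa using hu.sum_map_add_mul_succ_le (i := i) (t := 0) (by simp) (by simp) (by simp) (by simp)

theorem IsBubble.add_two_le_sup_erase (hw : ∀ j, 0 < w j) (hu : IsBubble w u) (i : Fin n) :
    u i + 2 ≤ (univ.erase i).sup w := by
  by_contra! hM
  have hd := hu.mul_succ_le_lcmW i
  have htwo := hu.two_mul_lcmW_le i
  have hsucc : w i * (u i + 1) = w i * u i + w i := by ring
  have hwM : (w i - 1) * (univ.erase i).sup w ≤ w i * (u i + 1) :=
    Nat.mul_le_mul (Nat.sub_le _ _) (by omega)
  have hwM' : w i * ((univ.erase i).sup w - 1) ≤ w i * u i := Nat.mul_le_mul_left _ (by omega)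
  obtain ⟨t, hts, htdvd, htD, htE⟩ := Multiset.exists_le_dvd_sum_map_mem_Icc w (hw i)
    (indexBag (univ.erase i) u) (fun j hj => ⟨hw j, le_sup (mem_of_mem_indexBag hj)⟩)
    (Nat.dvd_sub (dvd_lcmW w i) (dvd_mul_right (w i) (u i)))
    (by rw [sum_map_indexBag]; omega)
  have hfill := hu.sum_map_add_mul_succ_le (notMem_of_le_indexBag hts (notMem_erase i univ))
    (count_le_of_le_indexBag hts) htdvd (by omega)
  have := hw i
  omega

theorem IsBubble.mul_add_two_le_sup_erase_add (hu : IsBubble w u) (hpos : ∀ j, 0 < u j)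
    {i : Fin n} (hi : ∑ j ∈ univ.erase i, w j < lcmW w + w i) {c : ℕ}
    (hc : ∀ σ, ∃ S : Finset (Fin n), i ∉ S ∧ w i ∣ σ + ∑ j ∈ S, w j ∧ ∑ j ∈ S, w j ≤ c) :
    w i * (u i + 2) ≤ (univ.erase i).sup w + c := by
  have hd := hu.mul_succ_le_lcmW i
  have htwo := hu.two_mul_lcmW_le i
  have hsucc : w i * (u i + 2) = w i * (u i + 1) + w i := by ring
  have hsucc' : w i * (u i + 1) = w i * u i + w i := by ring
  by_cases hcd : lcmW w + w i ≤ c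
  · omega
  set s := indexBag (univ.erase i) (fun j => u j - 1)
  have hs : (s.map w).sum + ∑ j ∈ univ.erase i, w j = ∑ j ∈ univ.erase i, w j * u j := by
    rw [sum_map_indexBag, ← sum_add_distrib]
    refine sum_congr rfl fun j _ => ?_
    rw [Nat.mul_sub_one, Nat.sub_add_cancel (Nat.le_mul_of_pos_right _ (hpos j))]
  -- fill greedily below `d_w + w_i - 1 - c`, leaving room for a set of weight `≤ c` that fixes
  -- the residue modulo `w_i`
  obtain ⟨t, hts, htT, hgreedy⟩ := Multiset.exists_le_sum_map_le_and_eq_or_lt_add w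
    (lcmW w + w i - 1 - c) s (M := (univ.erase i).sup w)
    (fun j hj => le_sup (mem_of_mem_indexBag hj))
  obtain ⟨S, hiS, hdvd, hSc⟩ := hc (t.map w).sum
  have hsum : ((t + S.val).map w).sum = (t.map w).sum + ∑ j ∈ S, w j := by
    rw [Multiset.map_add, Multiset.sum_add, sum_eq_multiset_sum]
  have hfill := hu.sum_map_add_mul_succ_le (i := i) (t := t + S.val)
    (by simpa using ⟨notMem_of_le_indexBag hts (notMem_erase i univ), hiS⟩)
    (fun j => by
      have := count_le_of_le_indexBag hts j
      have := Multiset.nodup_iff_count_le_one.mp S.nodup j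
      have := hpos j
      rw [Multiset.count_add]
      omega)
    (by rwa [hsum])
    (by rw [hsum]; exact Nat.le_of_lt_add_of_dvd (by omega) hdvd (dvd_lcmW w i))
  rw [hsum] at hfill
  rcases hgreedy with rfl | hlt <;> omega

theorem exists_dvd_add_sum_le_cvalW {i : Fin n} (hwi : 0 < w i)
    (hne : ∀ r < w i, (BsetW w i r).Nonempty) (σ : ℕ) :
    ∃ S : Finset (Fin n), i ∉ S ∧ w i ∣ σ + ∑ j ∈ S, w j ∧ ∑ j ∈ S, w j ≤ cvalW w i := by
  have hr : (w i - 1) * σ % w i < w i := Nat.mod_lt _ hwi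
  obtain ⟨S, hiS, hS, hmod⟩ := Nat.sInf_mem (hne _ hr)
  refine ⟨S, hiS, ?_, ?_⟩
  · have hσ : σ + (w i - 1) * σ = w i * σ := by
      rw [Nat.sub_one_mul, Nat.add_sub_cancel' (Nat.le_mul_of_pos_left σ hwi)]
    have hmod' : ∑ j ∈ S, w j ≡ (w i - 1) * σ [MOD w i] := by
      rw [hS]; exact hmod
    exact (Nat.modEq_zero_iff_dvd).mp
      ((hmod'.add_left σ).trans (by rw [hσ, Nat.ModEq, Nat.mul_mod_right, Nat.zero_mod]))
  · calc ∑ j ∈ S, w j = bvalW w i ((w i - 1) * σ % w i) := by rw [bvalW, if_pos (hne _ hr), hS]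
      _ ≤ cvalW w i := le_sup (mem_range.mpr hr)

end Bubble

theorem bubble_pos_coord_bound_general {n : ℕ} (w : Fin n → ℕ) (hw : ∀ i, 0 < w i)
    (u : Fin n → ℕ) (hu : IsBubble w u) (hpos : ∀ j, 0 < u j)
    (i : Fin n) (hi : ∑ j ∈ Finset.univ.erase i, w j < lcmW w + w i) :
    (u i : ℤ) ≤ (((((Finset.univ.erase i).sup w + cvalW w i) / w i : ℕ)) : ℤ) - 2 := by
  have key : (u i + 2) * w i ≤ (univ.erase i).sup w + cvalW w i := by
    rw [mul_comm]
    by_cases hne : ∀ r < w i, (BsetW w i r).Nonempty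
    · exact hu.mul_add_two_le_sup_erase_add hpos hi (exists_dvd_add_sum_le_cvalW (hw i) hne)
    · push Not at hne
      obtain ⟨r, hr, hB⟩ := hne
      have hc : bvalW w i r ≤ cvalW w i := le_sup (mem_range.mpr hr)
      rw [bvalW, if_neg (Set.not_nonempty_iff_eq_empty.mpr hB), Nat.sub_one_mul] at hc
      have := Nat.mul_le_mul_left (w i) (hu.add_two_le_sup_erase hw i)
      omega
  have := (Nat.le_div_iff_mul_le (hw i)).mpr key
  omega

theorem bubble_pos_coord_bound {n : ℕ} (hn : 0 < n) (w : Fin n → ℕ) (hw : ∀ i, 0 < w i)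
    (u : Fin n → ℕ) (hu : IsBubble w u) (hpos : ∀ j, 0 < u j)
    (i : Fin n) (hi : ∑ j ∈ Finset.univ.erase i, w j < lcmW w + w i) :
    (u i : ℤ) ≤ (((((Finset.univ.erase i).sup w + cvalW w i) / w i : ℕ)) : ℤ) - 2 :=
  bubble_pos_coord_bound_general w hw u hu hpos i hi
end
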